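/- Let γ : S¹ → ℝᵈ be a simple closed curve, and suppose for i = 1, 2, 3 the shadow πᵢ(γ) is a simple path and the restriction of πᵢ to the image of γ is exactly 2-to-1 over the interior of the path (with exactly two points of γ mapping to the two endpoints). Then there is a continuous map fᵢ : γ → γ of topological degree −1 such that πᵢ(x) = πᵢ(fᵢ(x)) for all x ∈ γ, whose only fixed points are the two points mapping to the endpoints. -/

import Mathlib

/-!
Parametrising the shadow path by `[0, 1]` turns the projection into a continuous height
`h : S¹ → [0, 1]` with a unique minimum `a`, a unique maximum `b`, and at most two points on
every other level. On each of the two arcs from `a` to `b` the height is injective (a repeated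
value would also be taken on the other arc, by the intermediate value theorem, giving three
points on one level), hence strictly monotone. So there is an orientation-preserving
homeomorphism `Φ` of the universal cover, commuting with `t ↦ t + 2π`, with
`h (exp t) = (1 - cos (Φ t)) / 2`. The flip is `θ ↦ -θ` conjugated by `Φ`: it preserves `h`,
has degree `-1`, and its fixed points are the angles `0` and `π`, i.e. `a` and `b`.
-/

open Real unitInterval

/-- Orthogonal projection of `ℝᵈ` onto the coordinate hyperplane `{x : xᵢ = 0}`. -/
noncomputable def coordProj {d : ℕ} (i : Fin d) (x : EuclideanSpace ℝ (Fin d)) :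
    EuclideanSpace ℝ (Fin d) :=
  WithLp.toLp 2 (Function.update x i 0)

/-- `CircleDeg f n` : the continuous map `f : S¹ → S¹` has topological degree `n`,
expressed via a continuous lift `F : ℝ → ℝ` along the exponential covering map. -/
def CircleDeg (f : Circle → Circle) (n : ℤ) : Prop :=
  ∃ F : ℝ → ℝ, Continuous F ∧ (∀ t : ℝ, f (Circle.exp t) = Circle.exp (F t)) ∧
    ∀ t : ℝ, F (t + 2 * π) = F t + n * (2 * π)

open Set Function

theorem apply_add_int_mul_two_pi {F : ℝ → ℝ} {n : ℤ}
    (hF : ∀ t, F (t + 2 * π) = F t + n * (2 * π)) (t : ℝ) (m : ℤ) :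
    F (t + m * (2 * π)) = F t + n * m * (2 * π) := by
  have hper : Periodic (fun t => F t - n * t) (2 * π) := fun t => by simp only [hF]; ring
  linarith [hper.int_mul m t]

namespace Circle

noncomputable def mapOfLift (F : ℝ → ℝ) (z : Circle) : Circle := exp (F (Complex.arg z))

variable {F : ℝ → ℝ} {n : ℤ}

theorem mapOfLift_exp (hF : ∀ t, F (t + 2 * π) = F t + n * (2 * π)) (t : ℝ) :
    mapOfLift F (exp t) = exp (F t) := by
  obtain ⟨m, hm⟩ := exp_eq_exp.mp (exp_arg (exp t))
  rw [mapOfLift, hm, apply_add_int_mul_two_pi hF, ← Int.cast_mul]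
  exact (periodic_exp.int_mul _) _

theorem continuous_mapOfLift (hFc : Continuous F)
    (hF : ∀ t, F (t + 2 * π) = F t + n * (2 * π)) : Continuous (mapOfLift F) := by
  rw [(isCoveringMap_exp.isQuotientMap exp_surjective).continuous_iff,
    show mapOfLift F ∘ exp = exp ∘ F from funext (mapOfLift_exp hF)]
  fun_prop

theorem circleDeg_mapOfLift (hFc : Continuous F)
    (hF : ∀ t, F (t + 2 * π) = F t + n * (2 * π)) : CircleDeg (mapOfLift F) n :=
  ⟨F, hFc, mapOfLift_exp hF, hF⟩

theorem exp_arg_add_angleDiff (a b : Circle) : exp ((a : ℂ).arg + angleDiff a b) = b := by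
  rw [exp_add, exp_arg, mul_comm, exp_angleDiff_mul]

end Circle

noncomputable def periodicExtension {c : ℝ} (hc : 0 < c) (p : ℝ) (f : ℝ → ℝ) (t : ℝ) : ℝ :=
  f (toIcoMod hc p t) + toIcoDiv hc p t • c

section periodicExtension

variable {c p : ℝ} (hc : 0 < c) {f : ℝ → ℝ}

theorem periodicExtension_add_zsmul (t : ℝ) (k : ℤ) :
    periodicExtension hc p f (t + k • c) = periodicExtension hc p f t + k • c := by
  simp only [periodicExtension, toIcoMod_add_zsmul, toIcoDiv_add_zsmul, add_zsmul, add_assoc]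

theorem periodicExtension_eqOn_Ico : EqOn (periodicExtension hc p f) f (Ico p (p + c)) := by
  intro t ht
  rw [periodicExtension, (toIcoMod_eq_self hc).mpr ht,
    toIcoDiv_eq_of_sub_zsmul_mem_Ico hc (n := 0) (by simpa using ht), zero_smul, add_zero]

theorem periodicExtension_eqOn_Icc (hper : f (p + c) = f p + c) :
    EqOn (periodicExtension hc p f) f (Icc p (p + c)) := by
  intro t ht
  rcases ht.2.lt_or_eq with hlt | rfl
  · exact periodicExtension_eqOn_Ico hc ⟨ht.1, hlt⟩
  · have hp : p ∈ Ico p (p + c) := left_mem_Ico.mpr (by linarith)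
    simpa [hper, periodicExtension_eqOn_Ico hc hp] using
      periodicExtension_add_zsmul hc (p := p) (f := f) p 1

theorem apply_toIcoMod_mem_Ico (hmono : StrictMonoOn f (Icc p (p + c)))
    (hper : f (p + c) = f p + c) (t : ℝ) : f (toIcoMod hc p t) ∈ Ico (f p) (f p + c) := by
  have ht := toIcoMod_mem_Ico hc p t
  have hp : p ∈ Icc p (p + c) := left_mem_Icc.mpr (by linarith)
  exact ⟨hmono.monotoneOn hp (Ico_subset_Icc_self ht) ht.1,
    hper ▸ hmono (Ico_subset_Icc_self ht) (right_mem_Icc.mpr (by linarith)) ht.2⟩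

theorem strictMono_periodicExtension (hmono : StrictMonoOn f (Icc p (p + c)))
    (hper : f (p + c) = f p + c) : StrictMono (periodicExtension hc p f) := by
  intro s t hst
  have hs := toIcoMod_mem_Ico hc p s
  have ht := toIcoMod_mem_Ico hc p t
  have hfs := apply_toIcoMod_mem_Ico hc hmono hper s
  have hft := apply_toIcoMod_mem_Ico hc hmono hper t
  have es := toIcoMod_add_toIcoDiv_zsmul hc p s
  have et := toIcoMod_add_toIcoDiv_zsmul hc p t
  simp only [periodicExtension, zsmul_eq_mul] at *
  set n := toIcoDiv hc p s
  set m := toIcoDiv hc p t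
  rcases lt_trichotomy n m with hnm | hnm | hmn
  · have : ((n : ℝ) + 1) * c ≤ m * c := by gcongr; exact_mod_cast hnm
    linarith [hfs.2, hft.1]
  · rw [hnm] at es ⊢
    exact add_lt_add_left
      (hmono (Ico_subset_Icc_self hs) (Ico_subset_Icc_self ht) (by linarith)) _
  · have : ((m : ℝ) + 1) * c ≤ n * c := by gcongr; exact_mod_cast hmn
    linarith [hs.1, ht.2]

theorem surjective_periodicExtension (hcont : ContinuousOn f (Icc p (p + c)))
    (hper : f (p + c) = f p + c) : Surjective (periodicExtension hc p f) := by
  intro y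
  obtain ⟨x, hx, hfx⟩ : toIcoMod hc (f p) y ∈ f '' Icc p (p + c) :=
    intermediate_value_Icc (by linarith) hcont
      (hper ▸ Ico_subset_Icc_self (toIcoMod_mem_Ico hc _ y))
  refine ⟨x + toIcoDiv hc (f p) y • c, ?_⟩
  rw [periodicExtension_add_zsmul, periodicExtension_eqOn_Icc hc hper hx, hfx,
    toIcoMod_add_toIcoDiv_zsmul]

end periodicExtension

theorem exists_orderIso_add_eqOn_Icc {c p : ℝ} (hc : 0 < c) {f : ℝ → ℝ}
    (hcont : ContinuousOn f (Icc p (p + c))) (hmono : StrictMonoOn f (Icc p (p + c)))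
    (hper : f (p + c) = f p + c) :
    ∃ Φ : ℝ ≃o ℝ, (∀ t, Φ (t + c) = Φ t + c) ∧ EqOn Φ f (Icc p (p + c)) :=
  ⟨StrictMono.orderIsoOfSurjective _ (strictMono_periodicExtension hc hmono hper)
      (surjective_periodicExtension hc hcont hper),
    fun t => by simpa using periodicExtension_add_zsmul hc (p := p) (f := f) t 1,
    periodicExtension_eqOn_Icc hc hper⟩

structure IsTent (H : ℝ → ℝ) (t₀ t₁ : ℝ) : Prop where
  periodic : Periodic H (2 * π)
  lt : t₀ < t₁
  lt_add_two_pi : t₁ < t₀ + 2 * π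
  apply_left : H t₀ = 0
  apply_right : H t₁ = 1
  strictMonoOn : StrictMonoOn H (Icc t₀ t₁)
  strictAntiOn : StrictAntiOn H (Icc t₁ (t₀ + 2 * π))

/-- The angle `Φ t ∈ [0, 2π]` with `H t = (1 - cos Φ t) / 2`, taken in `[0, π]` while `H`
rises and in `[π, 2π]` while it falls. -/
noncomputable def tentAngle (H : ℝ → ℝ) (t₁ t : ℝ) : ℝ :=
  if t ≤ t₁ then arccos (1 - 2 * H t) else 2 * π - arccos (1 - 2 * H t)

namespace IsTent

variable {H : ℝ → ℝ} {t₀ t₁ : ℝ}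

theorem mem_Icc (hH : IsTent H t₀ t₁) {t : ℝ} (ht : t ∈ Icc t₀ (t₀ + 2 * π)) :
    H t ∈ Icc 0 1 := by
  have h₀ : t₀ ∈ Icc t₀ t₁ := left_mem_Icc.mpr hH.lt.le
  have h₁ : t₁ ∈ Icc t₀ t₁ := right_mem_Icc.mpr hH.lt.le
  have h₁' : t₁ ∈ Icc t₁ (t₀ + 2 * π) := left_mem_Icc.mpr hH.lt_add_two_pi.le
  have h₂ : t₀ + 2 * π ∈ Icc t₁ (t₀ + 2 * π) := right_mem_Icc.mpr hH.lt_add_two_pi.le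
  rcases le_total t t₁ with ht₁ | ht₁
  · have hmem : t ∈ Icc t₀ t₁ := ⟨ht.1, ht₁⟩
    rw [← hH.apply_left, ← hH.apply_right]
    exact ⟨hH.strictMonoOn.monotoneOn h₀ hmem ht.1, hH.strictMonoOn.monotoneOn hmem h₁ ht₁⟩
  · have hmem : t ∈ Icc t₁ (t₀ + 2 * π) := ⟨ht₁, ht.2⟩
    have hend : H (t₀ + 2 * π) = 0 := by rw [hH.periodic, hH.apply_left]
    rw [← hend, ← hH.apply_right]
    exact ⟨hH.strictAntiOn.antitoneOn hmem h₂ ht.2, hH.strictAntiOn.antitoneOn h₁' hmem ht₁⟩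

theorem continuous_tentAngle (hH : IsTent H t₀ t₁) (hHc : Continuous H) :
    Continuous (tentAngle H t₁) := by
  refine Continuous.if_le (by fun_prop) (by fun_prop) continuous_id continuous_const ?_
  rintro t rfl
  rw [hH.apply_right]
  norm_num [arccos_neg_one]
  ring

theorem strictMonoOn_tentAngle (hH : IsTent H t₀ t₁) :
    StrictMonoOn (tentAngle H t₁) (Icc t₀ (t₀ + 2 * π)) := by
  have hmaps : MapsTo (fun t => 1 - 2 * H t) (Icc t₀ (t₀ + 2 * π)) (Icc (-1) 1) := fun t ht => by
    have := hH.mem_Icc ht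
    constructor <;> linarith [this.1, this.2]
  have hrise : StrictMonoOn (tentAngle H t₁) (Icc t₀ t₁) := by
    refine (strictAntiOn_arccos.comp (f := fun t => 1 - 2 * H t)
      (fun s hs t ht hst => ?_) ?_).congr fun t ht => ?_
    · simpa using hH.strictMonoOn hs ht hst
    · exact hmaps.mono_left (Icc_subset_Icc_right (by linarith [hH.lt_add_two_pi]))
    · simp [tentAngle, ht.2]
  have hfall : StrictMonoOn (tentAngle H t₁) (Icc t₁ (t₀ + 2 * π)) := by
    have := strictAntiOn_arccos.comp_strictMonoOn (f := fun t => 1 - 2 * H t)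
      (fun s hs t ht hst => by simpa using hH.strictAntiOn hs ht hst)
      (hmaps.mono_left (Icc_subset_Icc_left hH.lt.le))
    have hsub : StrictMonoOn (fun t => 2 * π - arccos (1 - 2 * H t)) (Icc t₁ (t₀ + 2 * π)) :=
      fun s hs t ht hst => sub_lt_sub_left (this hs ht hst) _
    refine hsub.congr fun t ht => ?_
    rcases ht.1.eq_or_lt with rfl | ht₁
    · norm_num [tentAngle, hH.apply_right, arccos_neg_one]; ring
    · simp [tentAngle, ht₁.not_ge]
  rw [← Icc_union_Icc_eq_Icc hH.lt.le hH.lt_add_two_pi.le]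
  exact hrise.union hfall (isGreatest_Icc hH.lt.le) (isLeast_Icc hH.lt_add_two_pi.le)

theorem cos_tentAngle (hH : IsTent H t₀ t₁) {t : ℝ} (ht : t ∈ Icc t₀ (t₀ + 2 * π)) :
    cos (tentAngle H t₁ t) = 1 - 2 * H t := by
  have hHt := hH.mem_Icc ht
  rw [tentAngle, apply_ite cos, cos_two_pi_sub, ite_self]
  exact cos_arccos (by linarith [hHt.2]) (by linarith [hHt.1])

theorem exists_orderIso (hH : IsTent H t₀ t₁) (hHc : Continuous H) :
    ∃ Φ : ℝ ≃o ℝ, (∀ t, Φ (t + 2 * π) = Φ t + 2 * π) ∧ ∀ t, H t = (1 - cos (Φ t)) / 2 := by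
  have hend : tentAngle H t₁ (t₀ + 2 * π) = tentAngle H t₁ t₀ + 2 * π := by
    simp [tentAngle, hH.lt.le, hH.lt_add_two_pi.not_ge, hH.periodic t₀, hH.apply_left]
  obtain ⟨Φ, hΦ, hΦ_eq⟩ := exists_orderIso_add_eqOn_Icc two_pi_pos
    (hH.continuous_tentAngle hHc).continuousOn hH.strictMonoOn_tentAngle hend
  refine ⟨Φ, hΦ, fun t => ?_⟩
  have hper : Periodic (fun t => H t - (1 - cos (Φ t)) / 2) (2 * π) := fun t => by
    simp only [hH.periodic t, hΦ, cos_add_two_pi]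
  obtain ⟨s, hs, hts⟩ := hper.exists_mem_Ico two_pi_pos t t₀
  have hcos := hH.cos_tentAngle (Ico_subset_Icc_self hs)
  rw [← hΦ_eq (Ico_subset_Icc_self hs)] at hcos
  linarith

end IsTent

structure IsCircleFold (h : Circle → ℝ) (a b : Circle) : Prop where
  continuous : Continuous h
  mem_Icc : ∀ z, h z ∈ Icc 0 1
  eq_zero_iff : ∀ z, h z = 0 ↔ z = a
  eq_one_iff : ∀ z, h z = 1 ↔ z = b
  fiber_subset_pair : ∀ v ∈ Ioo (0 : ℝ) 1, ∃ x y, ∀ z, h z = v → z = x ∨ z = y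

namespace IsCircleFold

variable {h : Circle → ℝ} {a b : Circle}

theorem ne (hf : IsCircleFold h a b) : a ≠ b := by
  rintro rfl
  have h₀ := (hf.eq_zero_iff a).mpr rfl
  have h₁ := (hf.eq_one_iff a).mpr rfl
  linarith

theorem one_sub (hf : IsCircleFold h a b) : IsCircleFold (fun z => 1 - h z) b a where
  continuous := continuous_const.sub hf.continuous
  mem_Icc z := by have := hf.mem_Icc z; constructor <;> linarith [this.1, this.2]
  eq_zero_iff z := by rw [sub_eq_zero, eq_comm, hf.eq_one_iff]
  eq_one_iff z := by rw [sub_eq_self, hf.eq_zero_iff]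
  fiber_subset_pair v hv := by
    obtain ⟨x, y, hxy⟩ := hf.fiber_subset_pair (1 - v) ⟨by linarith [hv.2], by linarith [hv.1]⟩
    exact ⟨x, y, fun z hz => hxy z (by linarith)⟩

theorem eq_of_apply_eq (hf : IsCircleFold h a b) {v : ℝ} (hv : v ∉ Ioo 0 1) {z₁ z₂ : Circle}
    (h₁ : h z₁ = v) (h₂ : h z₂ = v) : z₁ = z₂ := by
  rcases (hf.mem_Icc z₁).1.eq_or_lt with hv0 | hv0
  · rw [(hf.eq_zero_iff z₁).mp (hv0.symm), (hf.eq_zero_iff z₂).mp (h₂.trans (h₁ ▸ hv0.symm))]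
  rcases (hf.mem_Icc z₁).2.lt_or_eq with hv1 | hv1
  · exact absurd (h₁ ▸ ⟨hv0, hv1⟩) hv
  · rw [(hf.eq_one_iff z₁).mp hv1, (hf.eq_one_iff z₂).mp (h₂.trans (h₁ ▸ hv1))]

theorem eq_or_eq_or_eq_of_apply_eq (hf : IsCircleFold h a b) {v : ℝ} (hv : v ∈ Ioo 0 1)
    {z₁ z₂ z₃ : Circle} (h₁ : h z₁ = v) (h₂ : h z₂ = v) (h₃ : h z₃ = v) :
    z₁ = z₂ ∨ z₁ = z₃ ∨ z₂ = z₃ := by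
  obtain ⟨x, y, hxy⟩ := hf.fiber_subset_pair v hv
  rcases hxy _ h₁ with rfl | rfl <;> rcases hxy _ h₂ with rfl | rfl <;>
    rcases hxy _ h₃ with rfl | rfl <;> simp

theorem injOn_Icc (hf : IsCircleFold h a b) {p q : ℝ} (hpq : p < q) (hqp : q < p + 2 * π)
    (hp : Circle.exp p = a) (hq : Circle.exp q = b) : InjOn (h ∘ Circle.exp) (Icc p q) := by
  suffices key : ∀ s ∈ Icc p q, ∀ t ∈ Icc p q, s < t → h (Circle.exp s) ≠ h (Circle.exp t) by
    intro s hs t ht hst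
    by_contra hne
    rcases lt_or_gt_of_ne hne with hlt | hlt
    exacts [key s hs t ht hlt hst, key t ht s hs hlt hst.symm]
  intro s hs t ht hlt hst
  have hinj : InjOn Circle.exp (Ico p (p + 2 * π)) := Circle.exp_injOn_Ico (by simp)
  have hsI : s ∈ Ico p (p + 2 * π) := ⟨hs.1, by linarith [ht.2]⟩
  have htI : t ∈ Ico p (p + 2 * π) := ⟨ht.1, by linarith [ht.2]⟩
  have hst' : Circle.exp s ≠ Circle.exp t := fun e => hlt.ne (hinj hsI htI e)
  set v := h (Circle.exp s)
  by_cases hv : v ∈ Ioo 0 1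
  swap
  · exact hst' (hf.eq_of_apply_eq hv rfl hst.symm)
  -- the value `v` is also taken on the complementary arc, giving a third point in its fiber
  obtain ⟨u, hu, huv⟩ : v ∈ (h ∘ Circle.exp) '' Icc q (p + 2 * π) := by
    refine intermediate_value_Icc' hqp.le
      (hf.continuous.comp Circle.exp.continuous).continuousOn ?_
    simp only [comp_apply, Circle.exp_add_two_pi, hp, hq, (hf.eq_zero_iff a).mpr rfl,
      (hf.eq_one_iff b).mpr rfl]
    exact Ioo_subset_Icc_self hv
  have hqu : q < u := hu.1.lt_of_ne (by
    rintro rfl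
    exact hv.2.ne (by simpa [hq, (hf.eq_one_iff b).mpr rfl] using huv.symm))
  have hup : u < p + 2 * π := hu.2.lt_of_ne (by
    rintro rfl
    exact hv.1.ne (by simpa [Circle.exp_add_two_pi, hp, (hf.eq_zero_iff a).mpr rfl] using huv))
  have huI : u ∈ Ico p (p + 2 * π) := ⟨by linarith [ht.2], hup⟩
  rcases hf.eq_or_eq_or_eq_of_apply_eq hv rfl hst.symm huv with e | e | e
  · exact hst' e
  · exact (hs.2.trans_lt hqu).ne (hinj hsI huI e)
  · exact (ht.2.trans_lt hqu).ne (hinj htI huI e)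

theorem strictMonoOn_Icc (hf : IsCircleFold h a b) {p q : ℝ} (hpq : p < q)
    (hqp : q < p + 2 * π) (hp : Circle.exp p = a) (hq : Circle.exp q = b) :
    StrictMonoOn (h ∘ Circle.exp) (Icc p q) :=
  ContinuousOn.strictMonoOn_of_injOn_Icc hpq.le
    (by simp [hp, hq, (hf.eq_zero_iff a).mpr rfl, (hf.eq_one_iff b).mpr rfl])
    (hf.continuous.comp Circle.exp.continuous).continuousOn (hf.injOn_Icc hpq hqp hp hq)

theorem isTent (hf : IsCircleFold h a b) :
    IsTent (h ∘ Circle.exp) (a : ℂ).arg ((a : ℂ).arg + Circle.angleDiff a b) := by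
  have hlt : (a : ℂ).arg < (a : ℂ).arg + Circle.angleDiff a b := by
    linarith [Circle.angleDiff_pos hf.ne]
  have hlt' : (a : ℂ).arg + Circle.angleDiff a b < (a : ℂ).arg + 2 * π := by
    linarith [Circle.angleDiff_lt_two_pi a b]
  have ha : Circle.exp (a : ℂ).arg = a := Circle.exp_arg a
  have ha' : Circle.exp ((a : ℂ).arg + 2 * π) = a := by rw [Circle.exp_add_two_pi, ha]
  have hb := Circle.exp_arg_add_angleDiff a b
  refine ⟨fun t => congrArg h (Circle.exp_add_two_pi t), hlt, hlt', ?_, ?_,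
    hf.strictMonoOn_Icc hlt (by linarith) ha hb, ?_⟩
  · simp [ha, (hf.eq_zero_iff a).mpr rfl]
  · simp [hb, (hf.eq_one_iff b).mpr rfl]
  · -- on the second arc `1 - h` rises from `b` back to `a`
    intro s hs t ht hst
    have := hf.one_sub.strictMonoOn_Icc hlt' (by linarith) hb ha' hs ht hst
    simp only [comp_apply] at this ⊢
    linarith

end IsCircleFold

noncomputable def conjNeg (Φ : ℝ ≃o ℝ) (t : ℝ) : ℝ := Φ.symm (-Φ t)

section conjNeg

variable {Φ : ℝ ≃o ℝ}

theorem continuous_conjNeg : Continuous (conjNeg Φ) :=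
  Φ.symm.continuous.comp Φ.continuous.neg

theorem conjNeg_add_two_pi (hΦ : ∀ t, Φ (t + 2 * π) = Φ t + 2 * π) (t : ℝ) :
    conjNeg Φ (t + 2 * π) = conjNeg Φ t - 2 * π := by
  have hsub : Φ (conjNeg Φ t - 2 * π) = Φ (conjNeg Φ t) - 2 * π := by
    have := hΦ (conjNeg Φ t - 2 * π)
    rw [sub_add_cancel] at this
    linarith
  rw [conjNeg, Φ.symm_apply_eq, hΦ, hsub, conjNeg, Φ.apply_symm_apply]
  ring

theorem exp_conjNeg_eq_exp_iff (hΦ : ∀ t, Φ (t + 2 * π) = Φ t + 2 * π) (t : ℝ) :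
    Circle.exp (conjNeg Φ t) = Circle.exp t ↔ sin (Φ t) = 0 := by
  have hshift := apply_add_int_mul_two_pi (n := 1) (by simpa using hΦ)
  simp only [Circle.exp_eq_exp, conjNeg, Φ.symm_apply_eq, hshift, sin_eq_zero_iff]
  constructor
  · rintro ⟨m, hm⟩
    exact ⟨-m, by push_cast at hm ⊢; linarith⟩
  · rintro ⟨n, hn⟩
    exact ⟨-n, by push_cast; linarith⟩

end conjNeg

theorem IsCircleFold.exists_flip {h : Circle → ℝ} {a b : Circle} (hf : IsCircleFold h a b) :
    ∃ g : Circle → Circle, Continuous g ∧ CircleDeg g (-1) ∧ (∀ z, h (g z) = h z) ∧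
      ∀ z, g z = z ↔ h z = 0 ∨ h z = 1 := by
  obtain ⟨Φ, hΦ, hhΦ⟩ := hf.isTent.exists_orderIso (hf.continuous.comp Circle.exp.continuous)
  replace hhΦ : ∀ t, h (Circle.exp t) = (1 - cos (Φ t)) / 2 := hhΦ
  have hlift (t : ℝ) : conjNeg Φ (t + 2 * π) = conjNeg Φ t + ((-1 : ℤ) : ℝ) * (2 * π) := by
    rw [conjNeg_add_two_pi hΦ]; push_cast; ring
  refine ⟨Circle.mapOfLift (conjNeg Φ), Circle.continuous_mapOfLift continuous_conjNeg hlift,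
    Circle.circleDeg_mapOfLift continuous_conjNeg hlift, fun z => ?_, fun z => ?_⟩ <;>
    rw [← Circle.exp_arg z, Circle.mapOfLift_exp hlift, hhΦ]
  · rw [hhΦ, conjNeg, Φ.apply_symm_apply, cos_neg]
  · rw [exp_conjNeg_eq_exp_iff hΦ, sin_eq_zero_iff_cos_eq]
    grind

theorem continuous_coordProj {d : ℕ} (i : Fin d) : Continuous (coordProj i) := by
  unfold coordProj
  fun_prop

/-- If the `i`-th shadow of a simple closed curve `γ` is a simple path `lam` and the
projection restricted to the curve is exactly 2-to-1 over the interior of the path, with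
exactly one point of the curve over each endpoint, then there is a "flipping" map of the
curve (expressed via the parameterization as `g : S¹ → S¹`) of topological degree `-1`
that preserves the projection, whose only fixed points are the two points over the
endpoints. -/
theorem flipping_map_exists (d : ℕ) (i : Fin d)
    (γ : Circle → EuclideanSpace ℝ (Fin d)) (hγ : Topology.IsEmbedding γ)
    (lam : I → EuclideanSpace ℝ (Fin d)) (hlam : Topology.IsEmbedding lam)
    (hrange : Set.range lam = coordProj i '' Set.range γ)
    (h2to1 : ∀ t : I, (t : ℝ) ∈ Set.Ioo (0 : ℝ) 1 →
      ∃ x y : Circle, x ≠ y ∧ {z : Circle | coordProj i (γ z) = lam t} = {x, y})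
    (hend0 : ∃! z : Circle, coordProj i (γ z) = lam 0)
    (hend1 : ∃! z : Circle, coordProj i (γ z) = lam 1) :
    ∃ g : Circle → Circle, Continuous g ∧ CircleDeg g (-1) ∧
      (∀ z : Circle, coordProj i (γ (g z)) = coordProj i (γ z)) ∧
      (∀ z : Circle, g z = z ↔
        (coordProj i (γ z) = lam 0 ∨ coordProj i (γ z) = lam 1)) := by
  obtain ⟨a, ha, ha'⟩ := hend0
  obtain ⟨b, hb, hb'⟩ := hend1
  choose h hh using fun z => hrange ▸ mem_image_of_mem (coordProj i) (mem_range_self (f := γ) z)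
  have hiff : ∀ z t, coordProj i (γ z) = lam t ↔ h z = t := fun z t => by
    rw [← hh z, hlam.injective.eq_iff]
  have hfold : IsCircleFold (fun z => (h z : ℝ)) a b := by
    refine ⟨?_, fun z => (h z).2, fun z => ?_, fun z => ?_, fun v hv => ?_⟩
    · refine continuous_subtype_val.comp (hlam.isInducing.continuous_iff.mpr ?_)
      simpa only [comp_def, hh] using (continuous_coordProj i).comp hγ.continuous
    · rw [Icc.coe_eq_zero, ← hiff]; exact ⟨ha' z, fun hz => hz ▸ ha⟩
    · rw [Icc.coe_eq_one, ← hiff]; exact ⟨hb' z, fun hz => hz ▸ hb⟩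
    · obtain ⟨x, y, -, hxy⟩ := h2to1 ⟨v, hv.1.le, hv.2.le⟩ hv
      refine ⟨x, y, fun z hz => ?_⟩
      have : z ∈ ({x, y} : Set Circle) := hxy ▸ (hiff z _).mpr (Subtype.ext hz)
      simpa using this
  obtain ⟨g, hg, hdeg, hgh, hfix⟩ := hfold.exists_flip
  refine ⟨g, hg, hdeg, fun z => ?_, fun z => ?_⟩
  · rw [← hh, ← hh, Subtype.ext (hgh z)]
  · rw [hfix, hiff, hiff, Icc.coe_eq_zero, Icc.coe_eq_one]
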